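/- arXiv:2505.23563 — 3 statements merged into one kernel-verified Lean document; each statement's English description precedes it below -/
import Mathlib

section
/- If X is a subset of the real line and ℝ \ X contains an open interval of length 2d, then the Gromov–Hausdorff distance between ℝ and X is at least d. -/
open scoped ENNReal NNReal

/-- A correspondence between `X` and `Y`: a relation whose projections are surjective. -/
def IsCorrespondence {X Y : Type*} (R : Set (X × Y)) : Prop :=
  (∀ x : X, ∃ y : Y, (x, y) ∈ R) ∧ (∀ y : Y, ∃ x : X, (x, y) ∈ R)

/-- The distortion of a relation between two (pseudo)metric spaces. -/
noncomputable def corrDis {X Y : Type*} [PseudoMetricSpace X] [PseudoMetricSpace Y]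
    (R : Set (X × Y)) : ℝ≥0∞ :=
  ⨆ p ∈ R, ⨆ q ∈ R, ENNReal.ofReal |dist (Prod.fst p) (Prod.fst q) - dist (Prod.snd p) (Prod.snd q)|

/-- The (generalized) Gromov–Hausdorff distance: half the infimum of distortions of
correspondences, valued in `[0, ∞]`. -/
noncomputable def ghDist (X Y : Type*) [PseudoMetricSpace X] [PseudoMetricSpace Y] : ℝ≥0∞ :=
  (⨅ R ∈ {R : Set (X × Y) | IsCorrespondence R}, corrDis R) / 2

/-- The space `X` with all distances multiplied by `lam`. -/
noncomputable def scaled (lam : ℝ≥0) (X : Type*) [PseudoMetricSpace X] :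
    PseudoMetricSpace X where
  dist x y := lam * dist x y
  dist_self x := by simp
  dist_comm x y := by simp [dist_comm]
  dist_triangle x y z := by
    have h := dist_triangle x y z
    have := mul_le_mul_of_nonneg_left h lam.coe_nonneg
    simpa [mul_add] using this

open Set

/-
A correspondence of distortion `D < 2d` between `ℝ` and `X` yields a map `f : ℝ → X` with
`| |s - t| - |f s - f t| | ≤ D`. Since `f` avoids the gap `(a - d, a + d)` and points at distance
`< 2d - D` have images closer than `2d`, the side of the gap on which `f t` lies is locally
constant in `t`, hence constant on the connected line. But the lower bound `|f s - f t| ≥ |s - t| - D`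
forces `f` to take values on both sides of `a`.
-/

lemma le_ghDist_iff {X Y : Type*} [PseudoMetricSpace X] [PseudoMetricSpace Y] {c : ℝ≥0∞} :
    c ≤ ghDist X Y ↔ ∀ R : Set (X × Y), IsCorrespondence R → c * 2 ≤ corrDis R := by
  rw [ghDist, ENNReal.le_div_iff_mul_le (Or.inl two_ne_zero) (Or.inl ENNReal.ofNat_ne_top)]
  simp only [mem_ofPred_eq, le_iInf_iff]

lemma IsCorrespondence.exists_abs_dist_sub_dist_le {X Y : Type*} [PseudoMetricSpace X]
    [PseudoMetricSpace Y] {R : Set (X × Y)} (hR : IsCorrespondence R) {r : ℝ}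
    (hr : corrDis R < ENNReal.ofReal r) :
    ∃ f : X → Y, ∃ D < r, ∀ s t, |dist s t - dist (f s) (f t)| ≤ D := by
  choose f hf using hR.1
  have hfin : corrDis R ≠ ∞ := (hr.trans ENNReal.ofReal_lt_top).ne
  refine ⟨f, (corrDis R).toReal, (ENNReal.lt_ofReal_iff_toReal_lt hfin).1 hr, fun s t => ?_⟩
  have hst : ENNReal.ofReal |dist s t - dist (f s) (f t)| ≤ corrDis R :=
    le_iSup₂_of_le (s, f s) (hf s) (le_iSup₂_of_le (t, f t) (hf t) le_rfl)
  simpa using ENNReal.toReal_mono hfin hst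

lemma le_iff_le_of_dist_le_add_of_forall_notMem_Ioo {α : Type*} [PseudoMetricSpace α]
    [PreconnectedSpace α] {f : α → ℝ} {a d D : ℝ} (hf : ∀ s t, dist (f s) (f t) ≤ dist s t + D)
    (hD : D < 2 * d) (hgap : ∀ t, f t ∉ Ioo (a - d) (a + d)) (s t : α) :
    f s ≤ a - d ↔ f t ≤ a - d := by
  have hside : ∀ x, f x ≤ a - d ∨ a + d ≤ f x := fun x => by
    by_contra! hx
    exact hgap x hx
  have hnear : ∀ x y, dist x y < 2 * d - D → (f x ≤ a - d → f y ≤ a - d) := by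
    intro x y hxy hx
    refine (hside y).resolve_right fun hy => ?_
    linarith [hf y x, le_abs_self (f y - f x), Real.dist_eq (f y) (f x), dist_comm x y]
  have hloc : IsLocallyConstant fun x => f x ≤ a - d := by
    refine (IsLocallyConstant.iff_eventually_eq _).2 fun x => ?_
    filter_upwards [Metric.ball_mem_nhds x (sub_pos.2 hD)] with y hy
    exact propext ⟨hnear y x (Metric.mem_ball.1 hy), hnear x y (Metric.mem_ball'.1 hy)⟩
  exact Iff.of_eq (hloc.apply_eq_of_preconnectedSpace s t)

lemma exists_le_and_le_of_abs_dist_sub_dist_le {f : ℝ → ℝ} {D : ℝ}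
    (hf : ∀ s t, |dist s t - dist (f s) (f t)| ≤ D) (c : ℝ) :
    ∃ s t, f s ≤ c ∧ c ≤ f t := by
  have hD : 0 ≤ D := by simpa using hf 0 0
  set M := |f 0 - c| + 2 * D
  -- `f (-q)` and `f q` are within `M + D` of `f 0` but at least `2M - D` apart.
  have straddle : ∀ q : ℝ, |q| = M → f (-q) ≤ f q → f (-q) ≤ c ∧ c ≤ f q := by
    intro q hq hle
    have hfar := (abs_le.1 (hf (-q) q)).2
    have hleft := (abs_le.1 (hf (-q) 0)).1
    have hright := (abs_le.1 (hf q 0)).1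
    rw [Real.dist_eq, show -q - q = -(2 * q) by ring, abs_neg, abs_mul, abs_two, hq, Real.dist_eq,
      abs_of_nonpos (sub_nonpos.2 hle)] at hfar
    simp only [Real.dist_eq, sub_zero, abs_neg, hq] at hleft hright
    have := abs_le.1 (le_refl |f 0 - c|)
    constructor <;> linarith [le_abs_self (f q - f 0), neg_abs_le (f (-q) - f 0)]
  have hM : |M| = M := abs_of_nonneg (by positivity)
  rcases le_total (f (-M)) (f M) with hle | hle
  · exact ⟨_, _, straddle M hM hle⟩
  · exact ⟨_, _, straddle (-M) (by rwa [abs_neg]) (by rwa [neg_neg])⟩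

theorem stmt7_general (X : Set ℝ) (a d : ℝ)
    (h : Set.Ioo (a - d) (a + d) ⊆ Xᶜ) :
    ENNReal.ofReal d ≤ ghDist ℝ X := by
  refine le_ghDist_iff.2 fun R hR => ?_
  by_contra! hlt
  rw [mul_comm, ← ENNReal.ofReal_ofNat, ← ENNReal.ofReal_mul zero_le_two] at hlt
  obtain ⟨f, D, hD, hf⟩ := hR.exists_abs_dist_sub_dist_le hlt
  have hg : ∀ s t, |dist s t - dist (f s : ℝ) (f t)| ≤ D := hf
  have hgap : ∀ t, (f t : ℝ) ∉ Ioo (a - d) (a + d) := fun t ht => h ht (f t).2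
  have hcoarse : ∀ s t, dist (f s : ℝ) (f t) ≤ dist s t + D := fun s t => by
    linarith [abs_le.1 (hg s t)]
  have hd : 0 < d := by linarith [(abs_nonneg _).trans (hg a a)]
  obtain ⟨s, t, hs, ht⟩ := exists_le_and_le_of_abs_dist_sub_dist_le hg a
  have hs' : (f s : ℝ) ≤ a - d := by
    by_contra! hs'
    exact hgap s ⟨hs', by linarith⟩
  have := (le_iff_le_of_dist_le_add_of_forall_notMem_Ioo hcoarse hD hgap s t).1 hs'
  linarith

/-- If the complement of `X ⊆ ℝ` contains an open interval of length `2d`, then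
`d_GH(ℝ, X) ≥ d`. -/
theorem stmt7 (X : Set ℝ) (a d : ℝ) (hd : 0 < d)
    (h : Set.Ioo (a - d) (a + d) ⊆ Xᶜ) :
    ENNReal.ofReal d ≤ ghDist ℝ X :=
  stmt7_general X a d h
end

section
/- If (a − d, a + d) is an open interval disjoint from a subset X of ℝ, and ℝ and X are realized as subsets of a common metric space Z with Hausdorff distance d' < d, then ℝ is covered by two disjoint nonempty open sets (the unions of open balls of radius d' + (d − d')/2 around points of X lying ≤ a − d and ≥ a + d respectively), contradicting connectedness; hence no such realization exists. -/
open scoped ENNReal NNReal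

/-
Take `d' < r < d`, so every point of `ℝ` lies within `r` of `X`. The points of `ℝ` within `r` of
`X ∩ (-∞, a - d]` and those within `r` of `X ∩ [a + d, ∞)` form two open sets covering `ℝ`, disjoint
because points of `X` on opposite sides of the gap are `2d > 2r` apart; by connectedness one of
them is all of `ℝ`. Choosing for every real number a point of `X` within `r` then gives a map
`ℝ → X` distorting distances by at most `2r` whose image lies on one side of `a`. No such map
exists: the images of `-R`, `0`, `R` must spread over an interval of length about `2R`.
-/

open Set Metric

/-- A `(1, ε)`-quasi-isometric embedding. -/
def IsRoughIsometry {α β : Type*} [PseudoMetricSpace α] [PseudoMetricSpace β] (ε : ℝ)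
    (ψ : α → β) : Prop :=
  ∀ a a', |dist (ψ a) (ψ a') - dist a a'| ≤ ε

namespace IsRoughIsometry

variable {α β γ : Type*} [PseudoMetricSpace α] [PseudoMetricSpace β] [PseudoMetricSpace γ]
  {ε : ℝ}

theorem isometry_comp {ψ : α → β} {i : β → γ} (hi : Isometry i) (hψ : IsRoughIsometry ε ψ) :
    IsRoughIsometry ε (i ∘ ψ) := fun a a' => by
  simpa only [Function.comp_apply, hi.dist_eq] using hψ a a'

theorem neg {ψ : α → ℝ} (hψ : IsRoughIsometry ε ψ) : IsRoughIsometry ε (-ψ) := fun a a' => by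
  simpa only [Pi.neg_apply, dist_neg_neg] using hψ a a'

theorem not_bddAbove_range {ψ : ℝ → ℝ} (hψ : IsRoughIsometry ε ψ) : ¬ BddAbove (range ψ) := by
  rintro ⟨c, hc⟩
  have hle : ∀ t, ψ t ≤ c := fun t => hc ⟨t, rfl⟩
  have hε : 0 ≤ ε := by simpa using hψ 0 0
  set R := c - ψ 0 + 2 * ε + 1 with hR
  have hR0 : 0 ≤ R := by linarith [hle 0]
  have hplus := hψ R 0
  have hminus := hψ (-R) 0
  have hspread := hψ R (-R)
  simp only [Real.dist_eq, sub_zero, sub_neg_eq_add, abs_neg, abs_of_nonneg hR0,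
    abs_of_nonneg (by linarith : 0 ≤ R + R)] at hplus hminus hspread
  rw [abs_le] at hplus hminus hspread
  have := neg_abs_le (ψ R - ψ 0)
  have := neg_abs_le (ψ (-R) - ψ 0)
  -- whichever of `ψ R`, `ψ (-R)` is larger exceeds `ψ 0 + R - 2ε = c + 1`
  cases abs_cases (ψ R - ψ (-R)) <;> linarith [hle R, hle (-R)]

theorem not_bddBelow_range {ψ : ℝ → ℝ} (hψ : IsRoughIsometry ε ψ) : ¬ BddBelow (range ψ) :=
  fun ⟨c, hc⟩ => hψ.neg.not_bddAbove_range ⟨-c, by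
    rintro _ ⟨t, rfl⟩
    exact neg_le_neg (hc ⟨t, rfl⟩)⟩

end IsRoughIsometry

theorem exists_isRoughIsometry_of_forall_dist_lt {α β Z : Type*} [PseudoMetricSpace α]
    [PseudoMetricSpace β] [PseudoMetricSpace Z] {f : α → Z} {g : β → Z} (hf : Isometry f)
    (hg : Isometry g) {P : β → Prop} {r : ℝ} (h : ∀ a, ∃ b, P b ∧ dist (f a) (g b) < r) :
    ∃ ψ : α → β, (∀ a, P (ψ a)) ∧ IsRoughIsometry (2 * r) ψ := by
  choose ψ hP hψ using h
  refine ⟨ψ, hP, fun a a' => abs_sub_le_iff.2 ⟨?_, ?_⟩⟩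
  · have := dist_triangle4 (g (ψ a)) (f a) (f a') (g (ψ a'))
    rw [hg.dist_eq, hf.dist_eq, dist_comm (g _)] at this
    linarith [hψ a, hψ a']
  · have := dist_triangle4 (f a) (g (ψ a)) (g (ψ a')) (f a')
    rw [hg.dist_eq, hf.dist_eq, dist_comm (g (ψ a')) (f a')] at this
    linarith [hψ a, hψ a']

theorem isOpen_setOf_exists_dist_lt {α β Z : Type*} [TopologicalSpace α] [PseudoMetricSpace Z]
    {f : α → Z} (hf : Continuous f) (g : β → Z) (P : β → Prop) (r : ℝ) :
    IsOpen {a | ∃ b, P b ∧ dist (f a) (g b) < r} := by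
  have : {a | ∃ b, P b ∧ dist (f a) (g b) < r} = f ⁻¹' ⋃ b ∈ {b | P b}, ball (g b) r := by
    ext; simp
  rw [this]
  exact (isOpen_biUnion fun _ _ => isOpen_ball).preimage hf

/-- If `(a-d, a+d)` is disjoint from `X ⊆ ℝ`, then there is no realization of `ℝ` and
`X` in a common metric space `Z` with Hausdorff distance `d' < d`: for any isometric
copies the Hausdorff distance is not at most `d'`. -/
theorem stmt8 (X : Set ℝ) (a d : ℝ) (hd : 0 < d) (h : Set.Ioo (a - d) (a + d) ⊆ Xᶜ)
    (Z : Type*) [MetricSpace Z] (f : ℝ → Z) (g : X → Z)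
    (hf : Isometry f) (hg : Isometry g) (d' : ℝ) (hd' : d' < d) :
    ¬ EMetric.hausdorffEdist (Set.range f) (Set.range g) ≤ ENNReal.ofReal d' := by
  intro hle
  obtain ⟨r, hd'r, hrd⟩ := exists_between (max_lt hd' hd)
  have hlt : hausdorffEDist (range f) (range g) < ENNReal.ofReal r :=
    hle.trans_lt <| (ENNReal.ofReal_lt_ofReal_iff ((le_max_right _ _).trans_lt hd'r)).2
      ((le_max_left _ _).trans_lt hd'r)
  have hnear : ∀ t, ∃ x : X, dist (f t) (g x) < r := fun t => by
    obtain ⟨_, ⟨x, rfl⟩, hx⟩ := exists_edist_lt_of_hausdorffEDist_lt (mem_range_self t) hlt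
    exact ⟨x, edist_lt_ofReal.1 hx⟩
  set U := {t | ∃ x : X, (x : ℝ) ≤ a - d ∧ dist (f t) (g x) < r}
  set V := {t | ∃ x : X, a + d ≤ (x : ℝ) ∧ dist (f t) (g x) < r}
  have hUV : Disjoint U V := disjoint_left.2 fun t ⟨x, hxa, hx⟩ ⟨y, hya, hy⟩ => by
    have := dist_triangle_left (g x) (g y) (f t)
    rw [hg.dist_eq, Subtype.dist_eq, Real.dist_eq, abs_sub_comm] at this
    linarith [le_abs_self ((y : ℝ) - x)]
  have hcover : univ ⊆ U ∪ V := fun t _ => by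
    obtain ⟨x, hx⟩ := hnear t
    by_cases hxa : (x : ℝ) ≤ a - d
    · exact Or.inl ⟨x, hxa, hx⟩
    · exact Or.inr ⟨x, not_lt.1 fun hxa' => h ⟨not_le.1 hxa, hxa'⟩ x.2, hx⟩
  rcases isPreconnected_univ.subset_or_subset (isOpen_setOf_exists_dist_lt hf.continuous _ _ _)
    (isOpen_setOf_exists_dist_lt hf.continuous _ _ _) hUV hcover with hU | hV
  · obtain ⟨ψ, hψX, hψ⟩ := exists_isRoughIsometry_of_forall_dist_lt hf hg fun t => hU (mem_univ t)
    exact (hψ.isometry_comp isometry_subtype_coe).not_bddAbove_range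
      ⟨a - d, forall_mem_range.2 hψX⟩
  · obtain ⟨ψ, hψX, hψ⟩ := exists_isRoughIsometry_of_forall_dist_lt hf hg fun t => hV (mem_univ t)
    exact (hψ.isometry_comp isometry_subtype_coe).not_bddBelow_range
      ⟨a + d, forall_mem_range.2 hψX⟩
end

section
/- Let R̃ be the metric space ℝ × {0} ∪ {(0,1)} ⊆ ℝ² with the L¹ metric. Then the Gromov–Hausdorff distance between ℤ and R̃ is at least 2/3; in particular it is strictly greater than 1/2. -/
open scoped ENNReal NNReal

/-- The real line with an extra point `(0,1)`, inside `ℝ²` with the `L¹` (taxicab) metric. -/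
noncomputable def Rtilde : Set (WithLp 1 (ℝ × ℝ)) :=
  (Set.range fun x : ℝ => (WithLp.equiv 1 (ℝ × ℝ)).symm (x, 0)) ∪
    {(WithLp.equiv 1 (ℝ × ℝ)).symm (0, 1)}


noncomputable def pt (x : ℝ) : ↥Rtilde :=
  ⟨(WithLp.equiv 1 (ℝ × ℝ)).symm (x, 0), Or.inl ⟨x, rfl⟩⟩

noncomputable def ppt : ↥Rtilde :=
  ⟨(WithLp.equiv 1 (ℝ × ℝ)).symm (0, 1), Or.inr rfl⟩

lemma dist_pt_pt (x y : ℝ) : dist (pt x) (pt y) = |x - y| := by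
  rw [Subtype.dist_eq]
  show dist ((WithLp.equiv 1 (ℝ × ℝ)).symm (x, 0)) ((WithLp.equiv 1 (ℝ × ℝ)).symm (y, 0)) = _
  rw [WithLp.prod_dist_eq_add (by norm_num)]
  simp [Real.dist_eq]

lemma dist_ppt_pt (x : ℝ) : dist ppt (pt x) = |x| + 1 := by
  rw [Subtype.dist_eq]
  show dist ((WithLp.equiv 1 (ℝ × ℝ)).symm (0, 1)) ((WithLp.equiv 1 (ℝ × ℝ)).symm (x, 0)) = _
  rw [WithLp.prod_dist_eq_add (by norm_num)]
  simp [Real.dist_eq, abs_sub_comm]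

set_option maxHeartbeats 2000000 in
lemma core (D : ℝ) (a : ℝ → ℤ)
    (hA : ∀ x : ℝ, |(|(a x : ℝ)|) - (|x| + 1)| ≤ D)
    (hB : ∀ x y : ℝ, |(|(a x : ℝ) - (a y : ℝ)|) - (|x - y|)| ≤ D) :
    4 / 3 ≤ D := by
  by_contra hD
  push_neg at hD
  have hD0 : 0 ≤ D := le_trans (abs_nonneg _) (hA 0)
  set x₀ : ℝ := (D + 4) / 4 with hx₀
  have hx₀pos : 0 < x₀ := by positivity
  have habsx₀ : |x₀| = x₀ := abs_of_pos hx₀pos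
  have habsnx₀ : |(-x₀)| = x₀ := by rw [abs_neg]; exact habsx₀
  -- bounds at 3 and -3
  have h3 := hA 3
  have hm3 := hA (-3)
  rw [show |(3:ℝ)| = 3 by norm_num] at h3
  rw [show |(-3:ℝ)| = 3 by norm_num] at hm3
  have h3l : 4 - D ≤ |(a 3 : ℝ)| := by
    have := abs_le.mp h3; linarith [this.1, this.2]
  have h3u : |(a 3 : ℝ)| ≤ 4 + D := by
    have := abs_le.mp h3; linarith [this.1, this.2]
  have hm3l : 4 - D ≤ |(a (-3) : ℝ)| := by
    have := abs_le.mp hm3; linarith [this.1, this.2]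
  have hm3u : |(a (-3) : ℝ)| ≤ 4 + D := by
    have := abs_le.mp hm3; linarith [this.1, this.2]
  -- integrality at ±x₀
  have hint : ∀ x : ℝ, |x| = x₀ → 2 ≤ |(a x : ℝ)| := by
    intro x hx
    have h := hA x
    rw [hx] at h
    have h1 : (1:ℝ) < |(a x : ℝ)| := by
      have h' := abs_le.mp h
      nlinarith [h'.1]
    rw [← Int.cast_abs] at h1 ⊢
    have h2 : (1:ℤ) < |a x| := by exact_mod_cast h1
    exact_mod_cast h2
  have hxl : 2 ≤ |(a x₀ : ℝ)| := hint x₀ habsx₀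
  have hmxl : 2 ≤ |(a (-x₀) : ℝ)| := hint (-x₀) habsnx₀
  -- pair bounds
  have hB1 := hB 3 (-3)
  rw [show |(3:ℝ) - (-3)| = 6 by norm_num] at hB1
  have hB1l : 6 - D ≤ |(a 3 : ℝ) - (a (-3) : ℝ)| := by
    have := abs_le.mp hB1; linarith [this.1]
  have hB2 := hB 3 x₀
  rw [show |(3:ℝ) - x₀| = 3 - x₀ by rw [abs_of_nonneg (by nlinarith : (0:ℝ) ≤ 3 - x₀)]] at hB2
  have hB2u := abs_le.mp (show |(a 3 : ℝ) - (a x₀ : ℝ)| ≤ 3 - x₀ + D by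
    have := abs_le.mp hB2; linarith [this.2])
  have hB3 := hB (-3) (-x₀)
  rw [show |(-3:ℝ) - (-x₀)| = 3 - x₀ by
    rw [abs_of_nonpos (by nlinarith : (-3:ℝ) - (-x₀) ≤ 0)]; ring] at hB3
  have hB3u := abs_le.mp (show |(a (-3) : ℝ) - (a (-x₀) : ℝ)| ≤ 3 - x₀ + D by
    have := abs_le.mp hB3; linarith [this.2])
  have hB4 := hB x₀ (-x₀)
  rw [show |x₀ - (-x₀)| = 2 * x₀ by rw [abs_of_nonneg (by nlinarith : (0:ℝ) ≤ x₀ - (-x₀))]; ring]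
    at hB4
  have hB4u := abs_le.mp (show |(a x₀ : ℝ) - (a (-x₀) : ℝ)| ≤ 2 * x₀ + D by
    have := abs_le.mp hB4; linarith [this.2])
  -- eliminate remaining absolute values by sign cases
  obtain hd | hd := le_abs.mp hB1l <;>
  obtain ⟨e3, s3⟩ | ⟨e3, s3⟩ := abs_cases ((a 3 : ℝ)) <;>
  obtain ⟨em3, sm3⟩ | ⟨em3, sm3⟩ := abs_cases ((a (-3) : ℝ)) <;>
  obtain ⟨ex, sx⟩ | ⟨ex, sx⟩ := abs_cases ((a x₀ : ℝ)) <;>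
  obtain ⟨emx, smx⟩ | ⟨emx, smx⟩ := abs_cases ((a (-x₀) : ℝ)) <;>
  rw [e3] at h3l h3u <;> rw [em3] at hm3l hm3u <;> rw [ex] at hxl <;> rw [emx] at hmxl <;>
  linarith [hB2u.1, hB2u.2, hB3u.1, hB3u.2, hB4u.1, hB4u.2, hd, s3, sm3, sx, smx,
    h3l, h3u, hm3l, hm3u, hxl, hmxl, hD, hD0]

lemma dis_ge (R : Set (ℤ × ↥Rtilde)) (hR : IsCorrespondence R) :
    ENNReal.ofReal (4 / 3) ≤ corrDis R := by
  by_contra hlt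
  push_neg at hlt
  have hfin : corrDis R ≠ ⊤ := (hlt.trans_le le_top).ne
  set D := (corrDis R).toReal with hDdef
  have hDlt : D < 4 / 3 := by
    have := (ENNReal.toReal_lt_toReal hfin ENNReal.ofReal_ne_top).mpr hlt
    rwa [ENNReal.toReal_ofReal (by norm_num)] at this
  have key : ∀ p ∈ R, ∀ q ∈ R,
      |dist (Prod.fst p) (Prod.fst q) - dist (Prod.snd p) (Prod.snd q)| ≤ D := by
    intro p hp q hq
    have h1 : ENNReal.ofReal |dist (Prod.fst p) (Prod.fst q) - dist (Prod.snd p) (Prod.snd q)|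
        ≤ corrDis R := le_iSup₂_of_le p hp (le_iSup₂_of_le q hq le_rfl)
    have := ENNReal.toReal_mono hfin h1
    rwa [ENNReal.toReal_ofReal (abs_nonneg _)] at this
  obtain ⟨n, hn⟩ := hR.2 ppt
  choose f hf using fun x : ℝ => hR.2 (pt x)
  have hA : ∀ x : ℝ, |(|((f x - n : ℤ) : ℝ)|) - (|x| + 1)| ≤ D := by
    intro x
    have := key (n, ppt) hn (f x, pt x) (hf x)
    simp only [Int.dist_eq, dist_ppt_pt] at this
    have e : |((f x - n : ℤ) : ℝ)| = |(n : ℝ) - (f x : ℝ)| := by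
      push_cast; rw [abs_sub_comm]
    rwa [e]
  have hB : ∀ x y : ℝ, |(|((f x - n : ℤ) : ℝ) - ((f y - n : ℤ) : ℝ)|) - (|x - y|)| ≤ D := by
    intro x y
    have := key (f x, pt x) (hf x) (f y, pt y) (hf y)
    simp only [Int.dist_eq, dist_pt_pt] at this
    have e : |((f x - n : ℤ) : ℝ) - ((f y - n : ℤ) : ℝ)| = |(f x : ℝ) - (f y : ℝ)| := by
      push_cast; ring_nf
    rwa [e]
  have := core D (fun x => f x - n) hA hB
  linarith

/-- The Gromov–Hausdorff distance between `ℤ` and `R̃` is at least `2/3`; in particular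
it is strictly greater than `1/2`. -/
theorem stmt11 : 2 / 3 ≤ ghDist ℤ ↥Rtilde ∧ 1 / 2 < ghDist ℤ ↥Rtilde := by
  have hinf : ENNReal.ofReal (4 / 3) ≤ ⨅ R ∈ {R : Set (ℤ × ↥Rtilde) | IsCorrespondence R},
      corrDis R := le_iInf₂ fun R hR => dis_ge R hR
  have h23 : (2 / 3 : ℝ≥0∞) ≤ ghDist ℤ ↥Rtilde := by
    rw [ghDist, ENNReal.le_div_iff_mul_le (Or.inl two_ne_zero) (Or.inl ENNReal.ofNat_ne_top)]
    refine le_trans (le_of_eq ?_) hinf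
    rw [show (2 / 3 : ℝ≥0∞) = ENNReal.ofReal (2 / 3) by
      rw [ENNReal.ofReal_div_of_pos (by norm_num)]; norm_num,
      show (2 : ℝ≥0∞) = ENNReal.ofReal 2 by norm_num,
      ← ENNReal.ofReal_mul (by norm_num)]
    norm_num
  refine ⟨h23, lt_of_lt_of_le ?_ h23⟩
  rw [show (1 / 2 : ℝ≥0∞) = ENNReal.ofReal (1 / 2) by
      rw [ENNReal.ofReal_div_of_pos (by norm_num)]; norm_num,
    show (2 / 3 : ℝ≥0∞) = ENNReal.ofReal (2 / 3) by
      rw [ENNReal.ofReal_div_of_pos (by norm_num)]; norm_num,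
    ENNReal.ofReal_lt_ofReal_iff (by norm_num)]
  norm_num
end
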